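/- arXiv:1606.03930 — 3 statements merged into one kernel-verified Lean document; each statement's English description precedes it below -/
import Mathlib

section
/- Let A1 be an N1×N1 matrix, D1 an N1×N1 diagonal matrix, and A2 an N2×N2 symmetric real matrix with eigenvalue μ and corresponding eigenvector u. If λ is an eigenvalue of the matrix A1 + μ·D1 with eigenvector w, then λ is an eigenvalue of the matrix I_{N2} ⊗ A1 + A2 ⊗ D1 with eigenvector u ⊗ w. -/
open Matrix
open scoped Kronecker

theorem stmt_0 {N1 N2 : ℕ}
    (A1 D1 : Matrix (Fin N1) (Fin N1) ℝ) (A2 : Matrix (Fin N2) (Fin N2) ℝ)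
    (hD1 : D1.IsDiag) (hA2 : A2.IsSymm)
    (μ lam : ℝ) (u : Fin N2 → ℝ) (w : Fin N1 → ℝ)
    (hu : u ≠ 0) (hA2u : A2 *ᵥ u = μ • u)
    (hw : w ≠ 0) (hAw : (A1 + μ • D1) *ᵥ w = lam • w) :
    (fun p : Fin N2 × Fin N1 => u p.1 * w p.2) ≠ 0 ∧
    ((1 : Matrix (Fin N2) (Fin N2) ℝ) ⊗ₖ A1 + A2 ⊗ₖ D1) *ᵥ
        (fun p : Fin N2 × Fin N1 => u p.1 * w p.2) =
      lam • (fun p : Fin N2 × Fin N1 => u p.1 * w p.2) := by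
  constructor
  · intro h
    obtain ⟨i, hi⟩ := Function.ne_iff.mp hu
    obtain ⟨j, hj⟩ := Function.ne_iff.mp hw
    have := congrFun h (i, j)
    simp at this
    rcases this with h | h
    · exact hi h
    · exact hj h
  · funext ⟨i, j⟩
    have hu' := congrFun hA2u i
    have hw' := congrFun hAw j
    simp [mulVec, dotProduct, Matrix.add_apply, Matrix.smul_apply] at hu' hw' ⊢
    rw [Fintype.sum_prod_type]
    have : ∀ k : Fin N2, ∑ l : Fin N1,
        ((1 : Matrix (Fin N2) (Fin N2) ℝ) i k * A1 j l + A2 i k * D1 j l) * (u k * w l)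
        = (1 : Matrix (Fin N2) (Fin N2) ℝ) i k * u k * (∑ l, A1 j l * w l)
          + A2 i k * u k * (∑ l, D1 j l * w l) := by
      intro k
      rw [Finset.mul_sum, Finset.mul_sum, ← Finset.sum_add_distrib]
      exact Finset.sum_congr rfl fun l _ => by ring
    simp only [kroneckerMap_apply, this]
    rw [Finset.sum_add_distrib]
    have h1 : ∑ k : Fin N2, (1 : Matrix (Fin N2) (Fin N2) ℝ) i k * u k * (∑ l, A1 j l * w l)
        = u i * ∑ l, A1 j l * w l := by
      rw [← Finset.sum_mul]
      congr 1
      simp [Matrix.one_apply]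
    have h2 : ∑ k : Fin N2, A2 i k * u k * (∑ l, D1 j l * w l)
        = (μ * u i) * ∑ l, D1 j l * w l := by
      rw [← Finset.sum_mul, hu']
    rw [h1, h2]
    have h3 : (∑ l, A1 j l * w l) + μ * (∑ l, D1 j l * w l) = lam * w j := by
      rw [← hw', Finset.mul_sum, ← Finset.sum_add_distrib]
      exact Finset.sum_congr rfl fun l _ => by ring
    linear_combination u i * h3
end

section
/- Let A1 be an N1×N1 real symmetric matrix, D1 an N1×N1 real diagonal matrix, A2 an N2×N2 real symmetric matrix, and α > 0. If μ_1, …, μ_{N2} are the eigenvalues of A2 (with multiplicity), then the characteristic polynomial of A_α = (I_{N2} ⊗ A1 + α·A2 ⊗ D1)/(1+α) equals the product over i = 1, …, N2 of the characteristic polynomials of A_α(μ_i) = (A1 + α·μ_i·D1)/(1+α). In particular, λ is an eigenvalue of A_α if and only if λ is an eigenvalue of A_α(μ_i) for some i. -/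
open Matrix Polynomial
open scoped Kronecker

variable {n : Type*} [Fintype n] [DecidableEq n] {R : Type*} [CommRing R]

lemma my_charpoly_conj (U M V : Matrix n n R) (hUV : U * V = 1)
    (hVU : V * U = 1) : (U * M * V).charpoly = M.charpoly := by
  unfold Matrix.charpoly
  have h : charmatrix (U * M * V) =
      (C : R →+* R[X]).mapMatrix U * charmatrix M * (C : R →+* R[X]).mapMatrix V := by
    unfold charmatrix
    rw [_root_.map_mul, _root_.map_mul, mul_sub, sub_mul]
    congr 1
    rw [← (scalar_commute (X : R[X]) (fun r => Commute.all _ _) _).eq, mul_assoc,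
      ← _root_.map_mul, hUV, _root_.map_one, mul_one]
  have h2 : ((C : R →+* R[X]).mapMatrix V).det * ((C : R →+* R[X]).mapMatrix U).det = 1 := by
    rw [← det_mul, ← _root_.map_mul, hVU, _root_.map_one, det_one]
  rw [h, det_mul, det_mul, mul_comm, ← mul_assoc, h2, one_mul]

lemma my_mem_spectrum_iff {K : Type*} [Field K] (M : Matrix n n K) (lam : K) :
    lam ∈ spectrum K M ↔ M.charpoly.eval lam = 0 := by
  rw [spectrum.mem_iff, Matrix.isUnit_iff_isUnit_det, isUnit_iff_ne_zero, not_ne_iff,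
    Matrix.charpoly, eval_det, matPolyEquiv_charmatrix, eval_sub, eval_X, eval_C]
  congr! 2

lemma my_charpoly_blockDiagonal {o m : Type*} [Fintype o] [DecidableEq o] [Fintype m]
    [DecidableEq m] (f : o → Matrix m m R) :
    (Matrix.blockDiagonal f).charpoly = ∏ a, (f a).charpoly := by
  unfold Matrix.charpoly
  have h : charmatrix (Matrix.blockDiagonal f)
      = Matrix.blockDiagonal (fun a => charmatrix (f a)) := by
    ext ⟨i, a⟩ ⟨j, b⟩
    by_cases hab : a = b
    · subst hab
      by_cases hij : i = j
      · subst hij; simp [charmatrix_apply, Matrix.blockDiagonal_apply, Matrix.diagonal_apply]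
      · simp [charmatrix_apply, Matrix.blockDiagonal_apply, Matrix.diagonal_apply,
          Prod.ext_iff, hij]
    · simp [charmatrix_apply, Matrix.blockDiagonal_apply, Matrix.diagonal_apply,
        Prod.ext_iff, hab]
  rw [h, Matrix.det_blockDiagonal]


theorem stmt_1 {N1 N2 : ℕ}
    (A1 D1 : Matrix (Fin N1) (Fin N1) ℝ) (A2 : Matrix (Fin N2) (Fin N2) ℝ)
    (hA1 : A1.IsSymm) (hD1 : D1.IsDiag) (hA2 : A2.IsSymm)
    (α : ℝ) (hα : 0 < α)
    (μ : Fin N2 → ℝ)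
    (hμ : A2.charpoly = ∏ i, (X - C (μ i))) :
    ((1 / (1 + α)) • ((1 : Matrix (Fin N2) (Fin N2) ℝ) ⊗ₖ A1 + α • (A2 ⊗ₖ D1))).charpoly =
      ∏ i, ((1 / (1 + α)) • (A1 + (α * μ i) • D1)).charpoly ∧
    ∀ lam : ℝ,
      lam ∈ spectrum ℝ ((1 / (1 + α)) • ((1 : Matrix (Fin N2) (Fin N2) ℝ) ⊗ₖ A1 + α • (A2 ⊗ₖ D1))) ↔
      ∃ i, lam ∈ spectrum ℝ ((1 / (1 + α)) • (A1 + (α * μ i) • D1)) := by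
  have hA2h : A2.IsHermitian := by
    rwa [Matrix.IsHermitian, Matrix.conjTranspose_eq_transpose_of_trivial]
  set eig : Fin N2 → ℝ := hA2h.eigenvalues with heig
  set U : Matrix (Fin N2) (Fin N2) ℝ := (hA2h.eigenvectorUnitary : Matrix (Fin N2) (Fin N2) ℝ)
    with hUdef
  have hU1 : U * star U = 1 := mem_unitaryGroup_iff.mp hA2h.eigenvectorUnitary.2
  have hU2 : star U * U = 1 := mem_unitaryGroup_iff'.mp hA2h.eigenvectorUnitary.2
  have hspec : A2 = U * Matrix.diagonal eig * star U := by
    have := hA2h.spectral_theorem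
    simpa using this
  -- charpoly of A2 via eig
  have hA2c : A2.charpoly = ∏ i, (X - C (eig i)) := by
    rw [hspec, my_charpoly_conj _ _ _ hU1 hU2,
      charpoly_of_upperTriangular _ (Matrix.blockTriangular_diagonal eig)]
    simp
  -- multiset equality of eigenvalues
  have hms : Finset.univ.val.map eig = Finset.univ.val.map μ := by
    have h1 : (∏ i, (X - C (eig i))) = ∏ i, (X - C (μ i)) := by rw [← hA2c, hμ]
    have h2 := congrArg Polynomial.roots h1
    rwa [Finset.prod_eq_multiset_prod, Finset.prod_eq_multiset_prod,
      show (Finset.univ.val.map fun i => X - C (eig i))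
        = (Finset.univ.val.map eig).map (fun a => X - C a) by rw [Multiset.map_map]; rfl,
      show (Finset.univ.val.map fun i => X - C (μ i))
        = (Finset.univ.val.map μ).map (fun a => X - C a) by rw [Multiset.map_map]; rfl,
      Polynomial.roots_multiset_prod_X_sub_C, Polynomial.roots_multiset_prod_X_sub_C] at h2
  have hprod : ∀ {M : Type} [CommMonoid M] (f : ℝ → M),
      ∏ i, f (eig i) = ∏ i, f (μ i) := by
    intro M _ f
    rw [Finset.prod_eq_multiset_prod, Finset.prod_eq_multiset_prod,
      show (Finset.univ.val.map fun i => f (eig i)) = (Finset.univ.val.map eig).map f by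
        rw [Multiset.map_map]; rfl,
      show (Finset.univ.val.map fun i => f (μ i)) = (Finset.univ.val.map μ).map f by
        rw [Multiset.map_map]; rfl, hms]
  set Bd : Matrix (Fin N2 × Fin N1) (Fin N2 × Fin N1) ℝ :=
    (1 / (1 + α)) • ((1 : Matrix (Fin N2) (Fin N2) ℝ) ⊗ₖ A1
      + α • (Matrix.diagonal eig ⊗ₖ D1)) with hBd
  set P : Matrix (Fin N2 × Fin N1) (Fin N2 × Fin N1) ℝ :=
    U ⊗ₖ (1 : Matrix (Fin N1) (Fin N1) ℝ) with hP
  set Q : Matrix (Fin N2 × Fin N1) (Fin N2 × Fin N1) ℝ :=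
    (star U) ⊗ₖ (1 : Matrix (Fin N1) (Fin N1) ℝ) with hQ
  have hPQ : P * Q = 1 := by
    rw [hP, hQ, ← Matrix.mul_kronecker_mul, hU1, Matrix.one_mul, Matrix.one_kronecker_one]
  have hQP : Q * P = 1 := by
    rw [hP, hQ, ← Matrix.mul_kronecker_mul, hU2, Matrix.one_mul, Matrix.one_kronecker_one]
  have hB : (1 / (1 + α)) • ((1 : Matrix (Fin N2) (Fin N2) ℝ) ⊗ₖ A1 + α • (A2 ⊗ₖ D1))
      = P * Bd * Q := by
    have k1 : P * ((1 : Matrix (Fin N2) (Fin N2) ℝ) ⊗ₖ A1) * Q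
        = (1 : Matrix (Fin N2) (Fin N2) ℝ) ⊗ₖ A1 := by
      rw [hP, hQ, ← Matrix.mul_kronecker_mul, ← Matrix.mul_kronecker_mul, Matrix.one_mul,
        Matrix.mul_one, Matrix.mul_one, hU1]
    have k2 : P * (Matrix.diagonal eig ⊗ₖ D1) * Q = A2 ⊗ₖ D1 := by
      rw [hP, hQ, ← Matrix.mul_kronecker_mul, ← Matrix.mul_kronecker_mul, Matrix.one_mul,
        Matrix.mul_one, ← hspec]
    rw [hBd, Matrix.mul_smul, Matrix.smul_mul, Matrix.mul_add, Matrix.add_mul,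
      Matrix.mul_smul, Matrix.smul_mul, k1, k2]
  set f : Fin N2 → Matrix (Fin N1) (Fin N1) ℝ :=
    fun a => (1 / (1 + α)) • (A1 + (α * eig a) • D1) with hf
  have hBd2 : Bd = Matrix.reindex (Equiv.prodComm (Fin N1) (Fin N2))
      (Equiv.prodComm (Fin N1) (Fin N2)) (Matrix.blockDiagonal f) := by
    ext ⟨i, k⟩ ⟨j, l⟩
    by_cases hij : i = j
    · subst hij
      simp [hBd, hf, Matrix.blockDiagonal_apply, Matrix.one_apply, Matrix.kroneckerMap_apply,
        Matrix.diagonal_apply_eq]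
      exact Or.inl (mul_assoc _ _ _).symm
    · simp [hBd, hf, Matrix.blockDiagonal_apply, Matrix.one_apply_ne hij,
        Matrix.kroneckerMap_apply, Matrix.diagonal_apply_ne _ hij, hij]
  have hcp : ((1 / (1 + α)) • ((1 : Matrix (Fin N2) (Fin N2) ℝ) ⊗ₖ A1
      + α • (A2 ⊗ₖ D1))).charpoly
      = ∏ i, ((1 / (1 + α)) • (A1 + (α * μ i) • D1)).charpoly := by
    rw [hB, my_charpoly_conj _ _ _ hPQ hQP, hBd2, Matrix.charpoly_reindex,
      my_charpoly_blockDiagonal]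
    exact hprod (fun t => ((1 / (1 + α)) • (A1 + (α * t) • D1)).charpoly)
  refine ⟨hcp, fun lam => ?_⟩
  rw [my_mem_spectrum_iff, hcp, Polynomial.eval_prod, Finset.prod_eq_zero_iff]
  constructor
  · rintro ⟨i, -, hi⟩
    exact ⟨i, (my_mem_spectrum_iff _ _).mpr hi⟩
  · rintro ⟨i, hi⟩
    exact ⟨i, Finset.mem_univ _, (my_mem_spectrum_iff _ _).mp hi⟩
end

section
/- Let A1 be an N1×N1 real matrix, D1 a diagonal 0/1 matrix whose set of unit diagonal indices is S with |S| = n, and μ ∈ ℝ. Suppose x ∈ ℝ^{N1} satisfies D1 x = x and x ≠ 0, and suppose λ̂ ∈ ℝ and ŵ ∈ ℝ^{N1} satisfy μ·D1·ŵ + A1·x = λ̂·x + μ·ŵ. Then the restriction x|_S of x to the coordinates in S is a nonzero vector and satisfies A1^{S} (x|_S) = λ̂ (x|_S), where A1^{S} is the principal submatrix of A1 on the rows and columns indexed by S. Hence λ̂ is an eigenvalue of A1^{S}. -/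
open Matrix

theorem stmt_5 {N1 n : ℕ}
    (A1 D1 : Matrix (Fin N1) (Fin N1) ℝ) (S : Finset (Fin N1))
    (hdiag : D1.IsDiag)
    (hD1 : ∀ i, D1 i i = if i ∈ S then 1 else 0)
    (hcard : S.card = n)
    (μ lamhat : ℝ) (x what : Fin N1 → ℝ)
    (hx : D1 *ᵥ x = x) (hx0 : x ≠ 0)
    (heq : μ • (D1 *ᵥ what) + A1 *ᵥ x = lamhat • x + μ • what) :
    (fun i : {i // i ∈ S} => x i) ≠ 0 ∧
    (A1.submatrix (fun i : {i // i ∈ S} => (i : Fin N1)) (fun i : {i // i ∈ S} => (i : Fin N1)))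
        *ᵥ (fun i : {i // i ∈ S} => x i) = lamhat • (fun i : {i // i ∈ S} => x i) ∧
    lamhat ∈ spectrum ℝ
      (A1.submatrix (fun i : {i // i ∈ S} => (i : Fin N1)) (fun i : {i // i ∈ S} => (i : Fin N1))) := by
  -- mulVec of diagonal matrix
  have hDv : ∀ (v : Fin N1 → ℝ) (i : Fin N1), (D1 *ᵥ v) i = D1 i i * v i := by
    intro v i
    simp only [Matrix.mulVec, dotProduct]
    rw [Finset.sum_eq_single i]
    · intro j _ hj
      rw [hdiag (Ne.symm hj), zero_mul]
    · intro h; exact absurd (Finset.mem_univ i) h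
  have hxS : ∀ i, i ∉ S → x i = 0 := by
    intro i hi
    have h1 := congrFun hx i
    rw [hDv x i, hD1 i, if_neg hi, zero_mul] at h1
    exact h1.symm
  -- eigen equation on S
  have hA : ∀ i ∈ S, (A1 *ᵥ x) i = lamhat * x i := by
    intro i hi
    have h1 := congrFun heq i
    simp only [Pi.add_apply, Pi.smul_apply, smul_eq_mul] at h1
    rw [hDv what i, hD1 i, if_pos hi, one_mul] at h1
    linarith
  set M := A1.submatrix (fun i : {i // i ∈ S} => (i : Fin N1)) (fun i : {i // i ∈ S} => (i : Fin N1)) with hM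
  set y : {i // i ∈ S} → ℝ := fun i => x i with hy
  have hsum : ∀ i : {i // i ∈ S}, (M *ᵥ y) i = (A1 *ᵥ x) (i : Fin N1) := by
    intro i
    simp only [Matrix.mulVec, dotProduct, hM, Matrix.submatrix_apply, hy]
    rw [Finset.sum_coe_sort S (fun j => A1 (i : Fin N1) j * x j)]
    exact Finset.sum_subset (Finset.subset_univ S) (fun j _ hj => by rw [hxS j hj, mul_zero])
  have heig : M *ᵥ y = lamhat • y := by
    funext i
    rw [hsum i, hA _ i.2]
    simp [hy]
  have hne : y ≠ 0 := by
    intro h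
    apply hx0
    funext i
    by_cases hi : i ∈ S
    · exact congrFun h ⟨i, hi⟩
    · exact hxS i hi
  refine ⟨hne, heig, ?_⟩
  rw [spectrum.mem_iff]
  intro hunit
  rw [Matrix.isUnit_iff_isUnit_det] at hunit
  have hdet : (algebraMap ℝ (Matrix {i // i ∈ S} {i // i ∈ S} ℝ) lamhat - M).det = 0 := by
    rw [← Matrix.exists_mulVec_eq_zero_iff]
    refine ⟨y, hne, ?_⟩
    have : algebraMap ℝ (Matrix {i // i ∈ S} {i // i ∈ S} ℝ) lamhat = lamhat • 1 := by
      simp [Algebra.algebraMap_eq_smul_one]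
    rw [this, Matrix.sub_mulVec, Matrix.smul_mulVec, Matrix.one_mulVec, heig, sub_self]
  rw [hdet] at hunit
  exact hunit.ne_zero rfl
end
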